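/- Fix λ ∈ (0, 1/2) and define ρ(r) := √r·(r^λ − 1)/(r − r^λ) for r ∈ (0,1) ∪ (1,∞). Then ρ(r) tends to λ/(1 − λ) as r → 1, and 0 < ρ(r) < λ/(1 − λ) for all r in the domain. -/

import Mathlib

/-!
Substituting `r = exp (2 t)` turns `√r (r^λ - 1) / (r - r^λ)` into `sinh (λ t) / sinh ((1 - λ) t)`.
Since `sinh` is strictly convex on `[0, ∞)` and vanishes at `0`, `sinh x / x` is strictly increasing
there, so `sinh (a t) / sinh (b t) < a / b` whenever `0 < a < b` and `t ≠ 0`; with `a = λ < 1 - λ = b`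
this is the upper bound. The limit at `r = 1` is the derivative `λ` of `r ↦ r^λ` at `1`, divided by
the derivative `1 - λ` of `r ↦ r - r^λ`.
-/

open Filter Topology Set Real

namespace Real

theorem strictConvexOn_sinh : StrictConvexOn ℝ (Ici 0) sinh := by
  refine StrictMonoOn.strictConvexOn_of_deriv (convex_Ici 0) continuous_sinh.continuousOn ?_
  rw [deriv_sinh, interior_Ici]
  exact cosh_strictMonoOn.mono Ioi_subset_Ici_self

theorem strictMonoOn_sinh_div_self : StrictMonoOn (fun x => sinh x / x) (Ioi 0) := by
  intro x hx y hy hxy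
  have h := strictConvexOn_sinh.secant_strict_mono self_mem_Ici (mem_Ici.2 hx.out.le)
    (mem_Ici.2 hy.out.le) hx.out.ne' hy.out.ne' hxy
  simpa only [sinh_zero, sub_zero] using h

theorem sinh_mul_div_sinh_mul_mem_Ioo {a b x : ℝ} (ha : 0 < a) (hab : a < b) (hx : 0 < x) :
    sinh (a * x) / sinh (b * x) ∈ Ioo 0 (a / b) := by
  have hb : 0 < b := ha.trans hab
  have hax : 0 < a * x := mul_pos ha hx
  have hbx : 0 < b * x := mul_pos hb hx
  have hmono := strictMonoOn_sinh_div_self hax hbx (mul_lt_mul_of_pos_right hab hx)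
  have hsinh_bx : 0 < sinh (b * x) := sinh_pos_iff.2 hbx
  refine ⟨div_pos (sinh_pos_iff.2 hax) hsinh_bx, ?_⟩
  rw [div_lt_div_iff₀ hax hbx] at hmono
  rw [div_lt_div_iff₀ hsinh_bx hb]
  nlinarith

theorem sinh_mul_div_sinh_mul_mem_Ioo_of_ne_zero {a b x : ℝ} (ha : 0 < a) (hab : a < b)
    (hx : x ≠ 0) : sinh (a * x) / sinh (b * x) ∈ Ioo 0 (a / b) := by
  rcases hx.lt_or_gt with hx | hx
  · have h := sinh_mul_div_sinh_mul_mem_Ioo ha hab (neg_pos.2 hx)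
    rwa [mul_neg, mul_neg, sinh_neg, sinh_neg, neg_div_neg_eq] at h
  · exact sinh_mul_div_sinh_mul_mem_Ioo ha hab hx

theorem sqrt_mul_rpow_sub_one_div_eq_sinh_div_sinh {r : ℝ} (hr : 0 < r) (l : ℝ) :
    √r * (r ^ l - 1) / (r - r ^ l) = sinh (l * (log r / 2)) / sinh ((1 - l) * (log r / 2)) := by
  set t := log r / 2
  have hlog : log r = 2 * t := by ring
  have hsqrt : √r = exp t := by
    rw [sqrt_eq_rpow, rpow_def_of_pos hr, hlog]; ring_nf
  have hrpow : r ^ l = exp (l * t) * exp (l * t) := by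
    rw [rpow_def_of_pos hr, hlog, ← exp_add]; ring_nf
  have hr_eq : r = exp t * exp t := by
    rw [← exp_add, ← two_mul, ← hlog, exp_log hr]
  have hexp : exp ((1 + l) * t) = exp t * exp (l * t) := by rw [← exp_add]; ring_nf
  have hnum : √r * (r ^ l - 1) = 2 * exp ((1 + l) * t) * sinh (l * t) := by
    rw [hsqrt, hrpow, sinh_eq, exp_neg, hexp]
    field_simp
  have hden : r - r ^ l = 2 * exp ((1 + l) * t) * sinh ((1 - l) * t) := by
    rw [hrpow, hr_eq, sinh_eq, exp_neg, hexp, sub_mul, one_mul, exp_sub]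
    field_simp
  rw [hnum, hden, mul_div_mul_left _ _ (by positivity)]

end Real

theorem tendsto_rpow_sub_one_div_sub_one (l : ℝ) :
    Tendsto (fun r : ℝ => (r ^ l - 1) / (r - 1)) (𝓝[≠] 1) (𝓝 l) := by
  have hderiv : HasDerivAt (fun x : ℝ => x ^ l) l 1 := by
    simpa using Real.hasDerivAt_rpow_const (x := 1) (p := l) (Or.inl one_ne_zero)
  refine (hasDerivAt_iff_tendsto_slope.1 hderiv).congr fun r => ?_
  simp [slope_def_field]

theorem tendsto_sqrt_mul_rpow_sub_one_div {l : ℝ} (hl : l ≠ 1) :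
    Tendsto (fun r : ℝ => √r * (r ^ l - 1) / (r - r ^ l)) (𝓝[≠] 1) (𝓝 (l / (1 - l))) := by
  have hsqrt : Tendsto (fun r : ℝ => √r) (𝓝[≠] 1) (𝓝 1) := by
    simpa using (continuous_sqrt.tendsto 1).mono_left nhdsWithin_le_nhds
  have hq := tendsto_rpow_sub_one_div_sub_one l
  have hlim := (hsqrt.mul hq).div (tendsto_const_nhds.sub hq) (sub_ne_zero.2 hl.symm)
  rw [one_mul] at hlim
  refine hlim.congr' ?_
  filter_upwards [self_mem_nhdsWithin] with r hr
  have hr1 : r - 1 ≠ 0 := sub_ne_zero.2 hr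
  have h1q : 1 - (r ^ l - 1) / (r - 1) = (r - r ^ l) / (r - 1) := by
    field_simp; ring
  rw [Pi.div_apply, h1q, mul_div_assoc, div_div_div_cancel_right₀ hr1, ← mul_div_assoc]

theorem stmt_9 (l : ℝ) (hl : l ∈ Set.Ioo (0:ℝ) (1/2)) :
    Tendsto (fun r : ℝ => Real.sqrt r * (r ^ l - 1) / (r - r ^ l)) (𝓝[≠] 1)
      (𝓝 (l / (1 - l))) ∧
    ∀ r ∈ Set.Ioo (0:ℝ) 1 ∪ Set.Ioi 1,
      0 < Real.sqrt r * (r ^ l - 1) / (r - r ^ l) ∧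
      Real.sqrt r * (r ^ l - 1) / (r - r ^ l) < l / (1 - l) := by
  obtain ⟨hl0, hl2⟩ := hl
  refine ⟨tendsto_sqrt_mul_rpow_sub_one_div (by linarith), fun r hr => ?_⟩
  have hr0 : 0 < r := by rcases hr with h | h <;> [exact h.1; exact one_pos.trans h]
  have hr1 : r ≠ 1 := by rcases hr with h | h <;> [exact h.2.ne; exact h.ne']
  have ht : log r / 2 ≠ 0 := div_ne_zero (log_ne_zero_of_pos_of_ne_one hr0 hr1) two_ne_zero
  rw [sqrt_mul_rpow_sub_one_div_eq_sinh_div_sinh hr0]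
  exact sinh_mul_div_sinh_mul_mem_Ioo_of_ne_zero hl0 (by linarith) ht
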